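/- arXiv:1306.0940 — 2 statements merged into one kernel-verified Lean document; each statement's English description precedes it below -/
import Mathlib

section
/- For any sequence of state-action pairs (s_t, a_t), t = 1,...,T, grouped into m episodes of length τ (T = mτ), with N_t(s,a) = #{t' < t : (s_{t'}, a_{t'}) = (s,a)}, the number of indices t in which the count at the start of the episode containing t satisfies N_{t_k}(s_t, a_t) ≤ τ is at most 2τ|S||A|. -/
open Finset

/-- `visits sa t p` is the number of times `t' < t` (times are 1-indexed) at which
the state-action pair `p` was sampled. -/
def visits {S A : Type*} [DecidableEq S] [DecidableEq A]
    (sa : ℕ → S × A) (t : ℕ) (p : S × A) : ℕ :=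
  ((Finset.Ico 1 t).filter (fun t' => sa t' = p)).card

/-- `epStart τ t = t_k` is the start time of the episode (of length τ) containing
time `t`, i.e. `t_k = (k-1)τ + 1`. -/
def epStart (τ t : ℕ) : ℕ := ((t - 1) / τ) * τ + 1

lemma visits_le_add {S A : Type*} [DecidableEq S] [DecidableEq A]
    (sa : ℕ → S × A) (p : S × A) {t' t : ℕ} (h : t' ≤ t) :
    visits sa t p ≤ visits sa t' p + (t - t') := by
  have hsub : (Finset.Ico 1 t).filter (fun x => sa x = p) ⊆
      ((Finset.Ico 1 t').filter (fun x => sa x = p)) ∪ Finset.Ico t' t := by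
    intro x hx
    simp only [Finset.mem_filter, Finset.mem_Ico, Finset.mem_union] at *
    rcases lt_or_ge x t' with hlt | hge
    · exact Or.inl ⟨⟨hx.1.1, hlt⟩, hx.2⟩
    · exact Or.inr ⟨hge, hx.1.2⟩
  calc visits sa t p ≤ _ := Finset.card_le_card hsub
    _ ≤ visits sa t' p + (Finset.Ico t' t).card := Finset.card_union_le _ _
    _ = visits sa t' p + (t - t') := by rw [Nat.card_Ico]

lemma visits_lt {S A : Type*} [DecidableEq S] [DecidableEq A]
    (sa : ℕ → S × A) (p : S × A) {t t' : ℕ} (h1 : 1 ≤ t) (h2 : t < t')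
    (hp : sa t = p) : visits sa t p < visits sa t' p := by
  have hnm : t ∉ (Finset.Ico 1 t).filter (fun x => sa x = p) := by
    simp [Finset.mem_Ico]
  have hsub : insert t ((Finset.Ico 1 t).filter (fun x => sa x = p)) ⊆
      (Finset.Ico 1 t').filter (fun x => sa x = p) := by
    intro x hx
    simp only [Finset.mem_insert, Finset.mem_filter, Finset.mem_Ico] at *
    rcases hx with rfl | hx
    · exact ⟨⟨h1, h2⟩, hp⟩
    · exact ⟨⟨hx.1.1, hx.1.2.trans h2⟩, hx.2⟩
  have := Finset.card_le_card hsub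
  rw [Finset.card_insert_of_notMem hnm] at this
  exact this

/-- The number of time steps `t ∈ {1,...,mτ}` at which the visit count, taken at
the start of the episode containing `t`, of the current state-action pair is at
most τ, is bounded by 2τ|S||A|. -/
theorem stmt9 {S A : Type*} [Fintype S] [Fintype A] [DecidableEq S] [DecidableEq A]
    (sa : ℕ → S × A) (τ m : ℕ) (hτ : 0 < τ) :
    ((Finset.Icc 1 (m * τ)).filter
        (fun t => visits sa (epStart τ t) (sa t) ≤ τ)).card
      ≤ 2 * τ * Fintype.card S * Fintype.card A := by
  set F := (Finset.Icc 1 (m * τ)).filter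
      (fun t => visits sa (epStart τ t) (sa t) ≤ τ) with hF
  have key : ∀ t ∈ F, visits sa t (sa t) < 2 * τ := by
    intro t ht
    simp only [hF, Finset.mem_filter, Finset.mem_Icc] at ht
    obtain ⟨⟨h1, _⟩, hv⟩ := ht
    have hep : epStart τ t = τ * ((t - 1) / τ) + 1 := by rw [epStart, Nat.mul_comm]
    have h1' := Nat.mod_add_div (t - 1) τ
    have h2' := Nat.mod_lt (t - 1) hτ
    have hle : epStart τ t ≤ t := by omega
    have := visits_le_add sa (sa t) hle
    omega
  have hone : ∀ t ∈ F, 1 ≤ t := by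
    intro t ht
    simp only [hF, Finset.mem_filter, Finset.mem_Icc] at ht
    exact ht.1.1
  have hinj : Set.InjOn (fun t => (sa t, visits sa t (sa t))) F := by
    intro t ht t' ht' heq
    simp only [Prod.mk.injEq] at heq
    obtain ⟨hp, hvv⟩ := heq
    have h1 : 1 ≤ t := hone t (Finset.mem_coe.mp ht)
    have h1' : 1 ≤ t' := hone t' (Finset.mem_coe.mp ht')
    rcases lt_trichotomy t t' with h | h | h
    · have := visits_lt sa (sa t) h1 h rfl
      rw [hp] at this hvv
      omega
    · exact h
    · have := visits_lt sa (sa t') h1' h rfl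
      rw [hp] at hvv
      omega
  have hmaps : ∀ t ∈ F, (sa t, visits sa t (sa t)) ∈
      (Finset.univ : Finset (S × A)) ×ˢ Finset.range (2 * τ) := by
    intro t ht
    simp only [Finset.mem_product, Finset.mem_univ, Finset.mem_range, true_and]
    exact key t ht
  have := Finset.card_le_card_of_injOn _ hmaps hinj
  rw [Finset.card_product, Finset.card_range, Finset.card_univ, Fintype.card_prod] at this
  calc F.card ≤ Fintype.card S * Fintype.card A * (2 * τ) := this
    _ = 2 * τ * Fintype.card S * Fintype.card A := by ring
end

section
/- Let β(n) = √(c·L / max{1, n}) for constants c, L > 0, and let (s_t,a_t), t=1,...,T be a sequence in a finite set S×A grouped into m episodes of length τ with counts N_{t_k}. Then ∑_{k=1}^m ∑_{i=1}^τ min{β(N_{t_k}(s_{t_k+i-1}, a_{t_k+i-1})), 1} ≤ 2τ|S||A| + 2√(2cL·|S||A|·T). -/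
/-!
Let `N_t` be the number of earlier visits of the pair played at time `t`. Inside an episode
`N_t` exceeds the count frozen at the episode start by less than `τ`. If the frozen count is
below `τ`, the term is at most `1` and `N_t < 2τ`, which happens at most `2τ` times per pair.
Otherwise the frozen count is at least `(N_t + 1) / 2`, so the term is at most
`√(2cL / (N_t + 1))`. For a fixed pair the `N_t` are distinct, so these terms sum to at most
`2√(2cL n_p)`, where `n_p` is the total number of visits of `p`; Cauchy–Schwarz over the pairs,
with `∑ n_p = T`, gives `2√(2cL |S||A| T)`.
-/

open Finset

lemma sum_Icc_sum_Icc_mul_add {M : Type*} [AddCommMonoid M] (g : ℕ → M) (m τ : ℕ) :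
    ∑ k ∈ Icc 1 m, ∑ i ∈ Icc 1 τ, g ((k - 1) * τ + i) = ∑ t ∈ Icc 1 (m * τ), g t := by
  induction m with
  | zero => simp
  | succ m ih =>
    have hIcc (n : ℕ) : Icc 1 n = Ioc 0 n := Icc_add_one_left_eq_Ioc 0 n
    rw [sum_Icc_succ_top (by omega), ih, Nat.add_sub_cancel, add_mul, one_mul, hIcc, hIcc, hIcc,
      ← sum_Ioc_consecutive g (m * τ).zero_le (Nat.le_add_right _ τ)]
    congr 1
    simpa using (sum_map (Ioc 0 τ) (addLeftEmbedding (m * τ)) g).symm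

lemma sum_range_inv_sqrt_succ_le (n : ℕ) : ∑ j ∈ range n, (√(j + 1))⁻¹ ≤ 2 * √n := by
  induction n with
  | zero => simp
  | succ n ih =>
    have hn : √n ≤ √(n + 1) := Real.sqrt_le_sqrt (by linarith)
    have hn' : 0 < √(n + 1) := by positivity
    have step : (√(n + 1))⁻¹ ≤ 2 * √(n + 1) - 2 * √n := by
      rw [inv_le_iff_one_le_mul₀ hn']
      nlinarith [Real.mul_self_sqrt (n.cast_nonneg : (0:ℝ) ≤ n),
        Real.mul_self_sqrt (by positivity : (0:ℝ) ≤ n + 1), Real.sqrt_nonneg n]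
    rw [sum_range_succ]
    push_cast
    linarith

section Visits

variable {S A : Type*} [DecidableEq S] [DecidableEq A] (sa : ℕ → S × A)

lemma visits_le_visits_add (t₀ t : ℕ) (p : S × A) :
    visits sa t p ≤ visits sa t₀ p + (t - t₀) := by
  have hsub : {t' ∈ Ico 1 t | sa t' = p} ⊆ {t' ∈ Ico 1 t₀ | sa t' = p} ∪ Ico t₀ t := by
    intro t' ht'
    simp only [mem_union, mem_filter, mem_Ico] at ht' ⊢
    obtain ⟨⟨h1, h2⟩, hp⟩ := ht'
    by_cases h' : t' < t₀
    · exact Or.inl ⟨⟨h1, h'⟩, hp⟩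
    · exact Or.inr ⟨by omega, h2⟩
  calc visits sa t p ≤ #({t' ∈ Ico 1 t₀ | sa t' = p} ∪ Ico t₀ t) := card_le_card hsub
    _ ≤ visits sa t₀ p + (t - t₀) := (card_union_le _ _).trans_eq (by rw [Nat.card_Ico]; rfl)

lemma visits_lt_visits {t t' : ℕ} (ht : 1 ≤ t) (htt' : t < t') :
    visits sa t (sa t) < visits sa t' (sa t) := by
  refine card_lt_card ((ssubset_iff_of_subset ?_).2 ⟨t, ?_, ?_⟩)
  · exact filter_subset_filter _ (Ico_subset_Ico_right htt'.le)
  · simp [mem_filter, ht, htt']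
  · simp [mem_filter]

lemma visits_injOn (p : S × A) : Set.InjOn (visits sa · p) {t | 1 ≤ t ∧ sa t = p} := by
  rintro t ⟨ht, rfl⟩ t' ⟨ht', hp⟩ h
  by_contra hne
  rcases lt_or_gt_of_ne hne with hlt | hlt
  · exact (visits_lt_visits sa ht hlt).ne h
  · exact (visits_lt_visits sa ht' hlt).ne (hp ▸ h.symm)

variable [Fintype S] [Fintype A]

lemma sum_visits (t : ℕ) : ∑ p, visits sa t p = t - 1 := by
  rw [← Nat.card_Ico 1 t, card_eq_sum_card_fiberwise (f := sa) (t := univ) fun _ _ => mem_univ _]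
  rfl

lemma sum_comp_visits_le {M : Type*} [AddCommMonoid M] [PartialOrder M] [IsOrderedAddMonoid M]
    (g : ℕ → M) (hg : ∀ j, 0 ≤ g j) (T : ℕ) :
    ∑ t ∈ Icc 1 T, g (visits sa t (sa t))
      ≤ ∑ p, ∑ j ∈ range (visits sa (T + 1) p), g j := by
  rw [← sum_fiberwise_of_maps_to (g := sa) (t := univ) fun _ _ => mem_univ _]
  refine sum_le_sum fun p _ => ?_
  have hinj : Set.InjOn (visits sa · p) ({t ∈ Icc 1 T | sa t = p} : Finset ℕ) :=
    (visits_injOn sa p).mono fun t ht => by simp_all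
  have hmaps : {t ∈ Icc 1 T | sa t = p}.image (visits sa · p) ⊆ range (visits sa (T + 1) p) := by
    simp only [subset_iff, mem_image, mem_filter, mem_Icc, mem_range]
    rintro _ ⟨t, ⟨⟨ht, htT⟩, rfl⟩, rfl⟩
    exact visits_lt_visits sa ht (Nat.lt_succ_of_le htT)
  calc ∑ t ∈ Icc 1 T with sa t = p, g (visits sa t (sa t))
      = ∑ j ∈ {t ∈ Icc 1 T | sa t = p}.image (visits sa · p), g j := by
        rw [sum_image hinj]
        exact sum_congr rfl fun t ht => by rw [(mem_filter.1 ht).2]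
    _ ≤ ∑ j ∈ range (visits sa (T + 1) p), g j :=
        sum_le_sum_of_subset_of_nonneg hmaps fun j _ _ => hg j

lemma card_visits_lt_le (n T : ℕ) :
    #{t ∈ Icc 1 T | visits sa t (sa t) < n} ≤ Fintype.card (S × A) * n := by
  have hrange (N : ℕ) : #{j ∈ range N | j < n} ≤ n :=
    (card_le_card fun j hj => mem_range.2 (mem_filter.1 hj).2).trans_eq (card_range n)
  calc #{t ∈ Icc 1 T | visits sa t (sa t) < n}
      = ∑ t ∈ Icc 1 T, if visits sa t (sa t) < n then 1 else 0 := card_filter _ _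
    _ ≤ ∑ p, ∑ j ∈ range (visits sa (T + 1) p), if j < n then 1 else 0 :=
        sum_comp_visits_le sa (fun j => if j < n then 1 else 0) (fun _ => Nat.zero_le _) T
    _ ≤ ∑ _p : S × A, n := sum_le_sum fun p _ => (card_filter _ _).symm.trans_le (hrange _)
    _ = Fintype.card (S × A) * n := by simp

lemma sum_sqrt_div_visits_succ_le {κ : ℝ} (hκ : 0 ≤ κ) (T : ℕ) :
    ∑ t ∈ Icc 1 T, √(κ / (visits sa t (sa t) + 1))
      ≤ 2 * √(κ * Fintype.card (S × A) * T) := by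
  set n := (visits sa (T + 1) ·)
  calc ∑ t ∈ Icc 1 T, √(κ / (visits sa t (sa t) + 1))
      = √κ * ∑ t ∈ Icc 1 T, (√(visits sa t (sa t) + 1))⁻¹ := by
        rw [mul_sum]
        exact sum_congr rfl fun t _ => by rw [Real.sqrt_div' _ (by positivity), div_eq_mul_inv]
    _ ≤ √κ * ∑ p, ∑ j ∈ range (n p), (√(j + 1))⁻¹ := by
        gcongr
        exact sum_comp_visits_le sa (fun j => (√(j + 1))⁻¹) (fun _ => by positivity) T
    _ ≤ √κ * ∑ p, √4 * √(n p) := by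
        gcongr with p
        rw [show (4 : ℝ) = 2 ^ 2 by norm_num, Real.sqrt_sq zero_le_two]
        exact sum_range_inv_sqrt_succ_le _
    _ ≤ √κ * (√(∑ _p : S × A, 4) * √(∑ p, (n p : ℝ))) := by
        gcongr
        exact Real.sum_sqrt_mul_sqrt_le _ (fun _ => by norm_num) (fun _ => Nat.cast_nonneg _)
    _ = 2 * √(κ * Fintype.card (S × A) * T) := by
        rw [← Nat.cast_sum, sum_visits, Nat.add_sub_cancel, sum_const, card_univ, nsmul_eq_mul,
          ← Real.sqrt_mul (by positivity), ← Real.sqrt_mul hκ,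
          show κ * (Fintype.card (S × A) * 4 * T) = 2 ^ 2 * (κ * Fintype.card (S × A) * T) by ring,
          Real.sqrt_mul' _ (by positivity), Real.sqrt_sq zero_le_two]

end Visits

/-- `n₀` plays the count frozen at the start of an episode and `n` the current count. -/
lemma min_sqrt_div_max_le {κ : ℝ} (hκ : 0 ≤ κ) {n₀ n τ : ℕ} (h : n < n₀ + τ) :
    min √(κ / ((max 1 n₀ : ℕ) : ℝ)) 1 ≤ (if n < 2 * τ then 1 else 0) + √(2 * κ / (n + 1)) := by
  by_cases hn₀ : n₀ < τ
  · rw [if_pos (by omega)]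
    exact (min_le_right _ _).trans (le_add_of_nonneg_right (Real.sqrt_nonneg _))
  · have h2 : (n : ℝ) + 1 ≤ 2 * n₀ := by exact_mod_cast (by omega : n + 1 ≤ 2 * n₀)
    calc min √(κ / ((max 1 n₀ : ℕ) : ℝ)) 1 ≤ √(κ / n₀) := by
          rw [max_eq_right (by omega)]
          exact min_le_left _ _
      _ = √(2 * κ / (2 * n₀)) := by rw [mul_div_mul_left κ _ two_ne_zero]
      _ ≤ √(2 * κ / (n + 1)) :=
          Real.sqrt_le_sqrt (div_le_div_of_nonneg_left (by positivity) (by positivity) h2)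
      _ ≤ _ := le_add_of_nonneg_left (by split_ifs <;> norm_num)

theorem stmt15_general {S A : Type*} [Fintype S] [Fintype A] [DecidableEq S] [DecidableEq A]
    (sa : ℕ → S × A) (τ m : ℕ) (c L : ℝ) (hc : 0 < c) (hL : 0 < L) :
    ∑ k ∈ Finset.Icc 1 m, ∑ i ∈ Finset.Icc 1 τ,
        min (Real.sqrt (c * L /
          (max 1 (visits sa ((k - 1) * τ + 1) (sa ((k - 1) * τ + 1 + i - 1))) : ℕ))) 1
      ≤ 2 * τ * Fintype.card S * Fintype.card A
        + 2 * Real.sqrt (2 * c * L * Fintype.card S * Fintype.card A * (m * τ)) := by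
  have hcL : 0 ≤ c * L := by positivity
  set N := fun t => visits sa t (sa t)
  calc _ ≤ ∑ k ∈ Icc 1 m, ∑ i ∈ Icc 1 τ, ((if N ((k - 1) * τ + i) < 2 * τ then 1 else 0)
          + √(2 * (c * L) / (N ((k - 1) * τ + i) + 1))) := by
        gcongr with k _ i hi
        obtain ⟨hi1, hiτ⟩ := mem_Icc.1 hi
        rw [show (k - 1) * τ + 1 + i - 1 = (k - 1) * τ + i by omega]
        refine min_sqrt_div_max_le hcL ?_
        exact (visits_le_visits_add sa ((k - 1) * τ + 1) _ _).trans_lt (by omega)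
    _ = ∑ t ∈ Icc 1 (m * τ), (if N t < 2 * τ then 1 else 0)
          + ∑ t ∈ Icc 1 (m * τ), √(2 * (c * L) / (N t + 1)) := by
        rw [← sum_add_distrib]
        exact sum_Icc_sum_Icc_mul_add
          (fun t => (if N t < 2 * τ then 1 else 0) + √(2 * (c * L) / (N t + 1))) m τ
    _ ≤ Fintype.card (S × A) * (2 * τ : ℕ)
          + 2 * √(2 * (c * L) * Fintype.card (S × A) * (m * τ : ℕ)) := by
        rw [sum_boole]
        gcongr
        · exact_mod_cast card_visits_lt_le sa (2 * τ) (m * τ)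
        · exact sum_sqrt_div_visits_succ_le sa (by positivity) (m * τ)
    _ = _ := by
        push_cast [Fintype.card_prod]
        ring_nf

/-- Sum of truncated confidence widths `min(β(N_{t_k}(s_t,a_t)), 1)` with
`β(n) = √(cL / max(1,n))`, over m episodes of length τ (T = mτ), is at most
`2τ|S||A| + 2√(2cL|S||A|T)`. -/
theorem stmt15 {S A : Type*} [Fintype S] [Fintype A] [DecidableEq S] [DecidableEq A]
    (sa : ℕ → S × A) (τ m : ℕ) (hτ : 0 < τ) (c L : ℝ) (hc : 0 < c) (hL : 0 < L) :
    ∑ k ∈ Finset.Icc 1 m, ∑ i ∈ Finset.Icc 1 τ,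
        min (Real.sqrt (c * L /
          (max 1 (visits sa ((k - 1) * τ + 1) (sa ((k - 1) * τ + 1 + i - 1))) : ℕ))) 1
      ≤ 2 * τ * Fintype.card S * Fintype.card A
        + 2 * Real.sqrt (2 * c * L * Fintype.card S * Fintype.card A * (m * τ)) :=
  stmt15_general sa τ m c L hc hL
end
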